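/- If every row of an n×(n+1) matrix over the alphabet {↓, S, ↑} (restricted to n+1−z designated non-Z columns) has pattern 'some ↓'s, then at most one S, then ↑'s', row 0 has at least one non-↑ entry, the last row is not all ↓'s among non-Z columns, and each row i+1 has at least one more ↓ than row i unless row i+1 contains an S (in which case at least as many), then the total number s of S entries satisfies s ≥ z. -/
import Mathlib


open Finset

/-- Entries of the constraint matrix restricted to non-Z columns. -/
inductive CEntry : Type
  | down : CEntry
  | slack : CEntry
  | up : CEntry
deriving DecidableEq

/-- If every row of the n×(n+1−z) constraint matrix (over non-Z columns) has the
pattern "some ↓'s, at most one S, then ↑'s", row 0 has a non-↑ entry, the last row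
is not all ↓'s, and each row gains a ↓ over the previous one unless it contains an S,
then the total number of S entries is at least z. -/
theorem many_slacks (n z : ℕ) (hn : 1 ≤ n) (hz : z ≤ n)
    (C : Fin n → Fin (n + 1 - z) → CEntry)
    (hpattern : ∀ i : Fin n,
      ((univ.filter (fun c => C i c = CEntry.slack)).card ≤ 1) ∧
      ∃ j : ℕ, (∀ c : Fin (n + 1 - z), (c : ℕ) < j → C i c = CEntry.down) ∧
               (∀ c : Fin (n + 1 - z), j < (c : ℕ) → C i c = CEntry.up))
    (hrow0 : ∃ c, C ⟨0, hn⟩ c ≠ CEntry.up)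
    (hlast : ∃ c, C ⟨n - 1, Nat.sub_lt hn one_pos⟩ c ≠ CEntry.down)
    (hgrow : ∀ i : ℕ, ∀ h : i + 1 < n,
      (univ.filter (fun c => C ⟨i, Nat.lt_of_succ_lt h⟩ c = CEntry.down)).card + 1 ≤
        (univ.filter (fun c => C ⟨i + 1, h⟩ c = CEntry.down)).card ∨
      ((∃ c, C ⟨i + 1, h⟩ c = CEntry.slack) ∧
        (univ.filter (fun c => C ⟨i, Nat.lt_of_succ_lt h⟩ c = CEntry.down)).card ≤
          (univ.filter (fun c => C ⟨i + 1, h⟩ c = CEntry.down)).card)) :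
    z ≤ ∑ i : Fin n, (univ.filter (fun c => C i c = CEntry.slack)).card := by
  classical
  set d : ℕ → ℕ := fun i =>
    if h : i < n then (univ.filter (fun c => C ⟨i, h⟩ c = CEntry.down)).card else 0 with hd_def
  set s : ℕ → ℕ := fun i =>
    if h : i < n then (univ.filter (fun c => C ⟨i, h⟩ c = CEntry.slack)).card else 0 with hs_def
  have key : ∀ i, i < n → i + 1 ≤ d i + ∑ k ∈ Finset.range (i + 1), s k := by
    intro i
    induction i with
    | zero =>
      intro h
      simp only [zero_add, Finset.sum_range_one]
      obtain ⟨c, hc⟩ := hrow0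
      have hcase : C ⟨0, hn⟩ c = CEntry.down ∨ C ⟨0, hn⟩ c = CEntry.slack := by
        cases hC : C ⟨0, hn⟩ c <;> simp_all
      simp only [hd_def, hs_def, dif_pos h]
      rcases hcase with h1 | h1
      · have : 0 < (univ.filter (fun c => C ⟨0, h⟩ c = CEntry.down)).card :=
          Finset.card_pos.mpr ⟨c, by simp [show C ⟨0, h⟩ c = CEntry.down from h1]⟩
        omega
      · have : 0 < (univ.filter (fun c => C ⟨0, h⟩ c = CEntry.slack)).card :=
          Finset.card_pos.mpr ⟨c, by simp [show C ⟨0, h⟩ c = CEntry.slack from h1]⟩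
        omega
    | succ i ih =>
      intro h
      have hi : i < n := Nat.lt_of_succ_lt h
      have hih := ih hi
      rw [Finset.sum_range_succ]
      rcases hgrow i h with hcase | ⟨⟨c, hc⟩, hcase⟩
      · have hd : d i + 1 ≤ d (i + 1) := by
          simp only [hd_def, dif_pos hi, dif_pos h]
          exact hcase
        omega
      · have hd : d i ≤ d (i + 1) := by
          simp only [hd_def, dif_pos hi, dif_pos h]
          exact hcase
        have hs : 1 ≤ s (i + 1) := by
          simp only [hs_def, dif_pos h]
          exact Finset.card_pos.mpr ⟨c, by simp [hc]⟩
        omega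
  have hsum : ∑ i : Fin n, (univ.filter (fun c => C i c = CEntry.slack)).card =
      ∑ k ∈ Finset.range n, s k := by
    rw [← Fin.sum_univ_eq_sum_range]
    refine Finset.sum_congr rfl fun i _ => ?_
    simp only [hs_def, dif_pos i.isLt, Fin.eta]
  have hlt : d (n - 1) < n + 1 - z := by
    obtain ⟨c, hc⟩ := hlast
    have hn1 : n - 1 < n := Nat.sub_lt hn one_pos
    have hss : (univ.filter (fun c => C ⟨n - 1, hn1⟩ c = CEntry.down)) ⊂ univ := by
      refine ⟨Finset.filter_subset _ _, fun hsub => ?_⟩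
      have := hsub (Finset.mem_univ c)
      simp only [Finset.mem_filter] at this
      exact hc this.2
    have := Finset.card_lt_card hss
    simp only [hd_def, dif_pos hn1]
    simpa using this
  have hkey := key (n - 1) (Nat.sub_lt hn one_pos)
  have hrange : n - 1 + 1 = n := Nat.succ_pred_eq_of_pos hn
  rw [hrange] at hkey
  rw [hsum]
  omega
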